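/- Let n ≥ 2, let 0 < λ_1 < ⋯ < λ_{n−1}, b_1, …, b_{n−1} < 0 and M > 0 be given. Define c_k = −Σ_{j=1}^{n−1} b_j b_k/(λ_j + λ_k), W(z) = Σ_{k=1}^{n−1} b_k/(z − λ_k), Z(z) = −1/(2Mz) + Σ_{k=1}^{n−1} c_k/(z − λ_k), W*(z) = −W(−z), Z*(z) = Z(−z). Fix 1 ≤ k ≤ n−1. Then there exist unique polynomials Q, P, P̂ with deg Q ≤ k, deg P ≤ k−1, deg P̂ ≤ k−1, Q(0) = 0 and P(0) = 1, such that, as z → ∞: Q(z)Z(z) − P̂(z) = O(z^{−1}), Q(z)W(z) − P(z) = O(1), and P̂(z) + P(z)W*(z) + Q(z)Z*(z) = O(z^{−(k+1)}). Moreover, writing Q(z) = Σ_{j=1}^{k} q_j z^j and setting β_j = Σ_{a=1}^{n−1} b_a λ_a^j and I_{ij} = Σ_{a,b=1}^{n−1} b_a b_b λ_a^i λ_b^j/(λ_a + λ_b), the coefficients satisfy the k×k linear system Σ_{j=1}^{k} I_{i, j−1} q_j = β_{i−1} for i = 1, …, k. -/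

import Mathlib

/-!
Subtracting polynomial parts, the first two conditions force `P̂` and `P` to be the polynomial
parts of `QZ` and `QW` (the constant of `P` being fixed by `P(0) = 1`). The choice of `c` gives
`Z(z) + Z(-z) = W(z) W(-z)`, and with it the third expression collapses to a Cauchy transform
`∑_d r_d / (z + λ_d)`. This is `O(z^{-(k+1)})` exactly when its first `k` moments vanish, and
these moments are `β_i - ∑_j I_{i+1,j} q_j`. Finally `(I_{i+1,j})` is a product of a weighted
Vandermonde, a Cauchy and a weighted Vandermonde matrix, so by Cauchy–Binet its determinant is a
sum of positive terms: the linear system has exactly one solution.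
-/

open Polynomial Filter Asymptotics Finset Topology

open scoped Classical in
theorem Finset.sum_injective_eq_sum_strictMono_perm {α β : Type*} [LinearOrder α] [Fintype α]
    [AddCommMonoid β] {k : ℕ} (F : (Fin k → α) → β) :
    ∑ g : Fin k → α with g.Injective, F g
      = ∑ f : Fin k → α with StrictMono f, ∑ σ : Equiv.Perm (Fin k), F (f ∘ σ) := by
  rw [← sum_product']
  symm
  refine sum_bij (fun p _ => p.1 ∘ p.2) ?_ ?_ ?_ (fun _ _ => rfl)
  · rintro ⟨f, σ⟩ hp
    simp only [mem_product, mem_filter, mem_univ, true_and, and_true] at hp ⊢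
    exact hp.injective.comp σ.injective
  · rintro ⟨f₁, σ₁⟩ hp₁ ⟨f₂, σ₂⟩ hp₂ heq
    simp only [mem_product, mem_filter, mem_univ, true_and, and_true] at hp₁ hp₂ heq
    have hf : f₁ = f₂ := by
      rw [← hp₁.range_inj hp₂, ← σ₁.surjective.range_comp, heq, σ₂.surjective.range_comp]
    subst hf
    exact Prod.ext rfl (Equiv.ext fun i => hp₁.injective (congrFun heq i))
  · intro g hg
    simp only [mem_filter, mem_univ, true_and] at hg
    refine ⟨(g ∘ Tuple.sort g, (Tuple.sort g).symm), ?_, ?_⟩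
    · simp only [mem_product, mem_filter, mem_univ, true_and, and_true]
      exact (Tuple.monotone_sort g).strictMono_of_injective (hg.comp (Tuple.sort g).injective)
    · ext i; simp

open scoped Classical in
/-- The Cauchy–Binet formula. -/
theorem Matrix.det_mul_eq_sum_strictMono {R : Type*} [CommRing R] {k m : ℕ}
    (M : Matrix (Fin k) (Fin m) R) (N : Matrix (Fin m) (Fin k) R) :
    (M * N).det = ∑ f : Fin k → Fin m with StrictMono f,
      (M.submatrix id f).det * (N.submatrix f id).det := by
  have expand : (M * N).det = ∑ g : Fin k → Fin m, (M.submatrix id g).det * ∏ i, N (g i) i := by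
    simp only [Matrix.det_apply', Matrix.mul_apply, Fintype.prod_sum, mul_sum,
      sum_mul, Matrix.submatrix_apply, id, prod_mul_distrib]
    rw [sum_comm]
    simp only [mul_assoc]
  have drop : ∑ g : Fin k → Fin m, (M.submatrix id g).det * ∏ i, N (g i) i
      = ∑ g : Fin k → Fin m with g.Injective, (M.submatrix id g).det * ∏ i, N (g i) i := by
    refine (sum_filter_of_ne fun g _ hg => ?_).symm
    by_contra hinj
    obtain ⟨a, b, hab, hne⟩ := Function.not_injective_iff.1 hinj
    exact hg (by rw [Matrix.det_zero_of_column_eq hne (fun i => by simp [hab]), zero_mul])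
  rw [expand, drop, sum_injective_eq_sum_strictMono_perm]
  refine sum_congr rfl fun f _ => ?_
  rw [Matrix.det_apply' (N.submatrix f id), mul_sum]
  refine sum_congr rfl fun σ _ => ?_
  rw [show M.submatrix id (f ∘ σ) = (M.submatrix id f).submatrix id σ from rfl,
    Matrix.det_permute']
  simp only [Matrix.submatrix_apply, id_eq, Function.comp_apply]
  ring

theorem Matrix.det_cauchy_succ {F : Type*} [Field F] {r : ℕ} (x y : Fin (r + 1) → F)
    (hxy : ∀ i j, x i + y j ≠ 0) :
    (Matrix.of fun i j => (x i + y j)⁻¹).det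
      = (x 0 + y 0)⁻¹ * (∏ i : Fin r, (x i.succ - x 0) / (x i.succ + y 0))
        * (∏ j : Fin r, (y j.succ - y 0) / (x 0 + y j.succ))
        * (Matrix.of fun i j : Fin r => (x i.succ + y j.succ)⁻¹).det := by
  set C : Matrix (Fin (r + 1)) (Fin (r + 1)) F := Matrix.of fun i j => (x i + y j)⁻¹
  -- Subtracting multiples of row `0` clears column `0` below the diagonal and leaves, in the
  -- lower right corner, a Cauchy matrix with rescaled rows and columns.
  set c : Fin (r + 1) → F := fun i => if i = 0 then 0 else (x 0 + y 0) / (x i + y 0)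
  set C' : Matrix (Fin (r + 1)) (Fin (r + 1)) F := Matrix.of fun i j => C i j - c i * C 0 j
  have hrow : C.det = C'.det :=
    Matrix.det_eq_of_forall_row_eq_smul_add_const c 0 (by simp [c]) fun i j => by
      by_cases hi : i = 0 <;> simp [C', c, hi]
  have hcol : ∀ i : Fin r, C' i.succ 0 = 0 := fun i => by
    have := hxy i.succ 0
    have := hxy 0 0
    simp [C', C, c]
    field_simp
    ring
  set C₁ : Matrix (Fin r) (Fin r) F := Matrix.of fun i j => (x i.succ + y j.succ)⁻¹
  have hminor : C'.submatrix Fin.succ Fin.succ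
      = Matrix.of fun i j => (x i.succ - x 0) / (x i.succ + y 0) *
        (Matrix.of fun i j => (y j.succ - y 0) / (x 0 + y j.succ) * C₁ i j) i j := by
    ext i j
    have := hxy i.succ j.succ
    have := hxy i.succ 0
    have := hxy 0 j.succ
    simp [C', C, C₁, c]
    field_simp
    ring
  rw [hrow, Matrix.det_succ_column_zero, Fin.sum_univ_succ]
  simp only [hcol, mul_zero, zero_mul, sum_const_zero, add_zero, Fin.val_zero, pow_zero,
    one_mul, Fin.succAbove_zero]
  rw [hminor, Matrix.det_mul_column, Matrix.det_mul_row]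
  simp [C', C, c, mul_assoc]

section Positivity

variable {K : Type*} [Field K] [LinearOrder K] [IsStrictOrderedRing K]

theorem Matrix.det_vandermonde_pos {n : ℕ} {v : Fin n → K} (hv : StrictMono v) :
    0 < (Matrix.vandermonde v).det := by
  rw [Matrix.det_vandermonde]
  exact prod_pos fun i _ => prod_pos fun j hj => sub_pos.2 (hv (mem_Ioi.1 hj))

theorem Matrix.det_cauchy_pos {r : ℕ} {x y : Fin r → K} (hx : StrictMono x) (hy : StrictMono y)
    (hxy : ∀ i j, 0 < x i + y j) : 0 < (Matrix.of fun i j => (x i + y j)⁻¹).det := by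
  induction r with
  | zero => simp
  | succ r ih =>
    rw [Matrix.det_cauchy_succ x y fun i j => (hxy i j).ne']
    have h₀ := inv_pos.2 (hxy 0 0)
    have hd := prod_pos fun i (_ : i ∈ univ) =>
      div_pos (sub_pos.2 (hx (Fin.succ_pos i))) (hxy i.succ 0)
    have he := prod_pos fun j (_ : j ∈ univ) =>
      div_pos (sub_pos.2 (hy (Fin.succ_pos j))) (hxy 0 j.succ)
    have h₁ := ih (hx.comp Fin.strictMono_succ) (hy.comp Fin.strictMono_succ) fun i j => hxy _ _
    positivity

open scoped Classical in
theorem Matrix.det_of_sum_mul_pow_div_add_pos {k m : ℕ} {x y p q : Fin m → K}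
    (hx : StrictMono x) (hy : StrictMono y) (hxy : ∀ a d, 0 < x a + y d)
    (hp : ∀ a, 0 < p a) (hq : ∀ d, 0 < q d) (hk : k ≤ m) :
    0 < (Matrix.of fun i j : Fin k =>
      ∑ a, ∑ d, p a * q d * x a ^ (i : ℕ) * y d ^ (j : ℕ) / (x a + y d)).det := by
  set U : Matrix (Fin k) (Fin m) K := Matrix.of fun i a => p a * x a ^ (i : ℕ)
  set C : Matrix (Fin m) (Fin m) K := Matrix.of fun a d => (x a + y d)⁻¹
  set V : Matrix (Fin m) (Fin k) K := Matrix.of fun d j => q d * y d ^ (j : ℕ)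
  have hfactor : (Matrix.of fun i j : Fin k =>
      ∑ a, ∑ d, p a * q d * x a ^ (i : ℕ) * y d ^ (j : ℕ) / (x a + y d)) = U * (C * V) := by
    ext i j
    simp only [U, C, V, Matrix.mul_apply, Matrix.of_apply, mul_sum]
    refine sum_congr rfl fun a _ => sum_congr rfl fun d _ => ?_
    ring
  have hU : ∀ f : Fin k → Fin m, (U.submatrix id f).det
      = (∏ j, p (f j)) * (Matrix.vandermonde (x ∘ f)).det := by
    intro f
    rw [← Matrix.det_transpose (Matrix.vandermonde _), ← Matrix.det_mul_row]
    rfl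
  have hV : ∀ g : Fin k → Fin m, (V.submatrix g id).det
      = (∏ i, q (g i)) * (Matrix.vandermonde (y ∘ g)).det := by
    intro g
    rw [← Matrix.det_mul_column]
    rfl
  rw [hfactor, Matrix.det_mul_eq_sum_strictMono]
  have hne : (univ.filter fun f : Fin k → Fin m => StrictMono f).Nonempty :=
    ⟨Fin.castLE hk, by simpa using Fin.strictMono_castLE hk⟩
  refine sum_pos (fun f hf => ?_) hne
  have hf : StrictMono f := by simpa using hf
  rw [show (C * V).submatrix f id = C.submatrix f id * V from rfl,
    Matrix.det_mul_eq_sum_strictMono]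
  refine mul_pos ?_ (sum_pos (fun g hg => ?_) hne)
  · rw [hU]
    exact mul_pos (prod_pos fun j _ => hp _) (Matrix.det_vandermonde_pos (hx.comp hf))
  · have hg : StrictMono g := by simpa using hg
    rw [hV]
    exact mul_pos (Matrix.det_cauchy_pos (hx.comp hf) (hy.comp hg) fun i j => hxy _ _)
      (mul_pos (prod_pos fun j _ => hq _) (Matrix.det_vandermonde_pos (hy.comp hg)))

end Positivity

theorem Polynomial.eq_zero_of_tendsto_zero {𝕜 : Type*} [NormedField 𝕜] [LinearOrder 𝕜]
    [IsStrictOrderedRing 𝕜] [OrderTopology 𝕜] {p : 𝕜[X]}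
    (h : Tendsto (fun x => p.eval x) atTop (𝓝 0)) : p = 0 :=
  leadingCoeff_eq_zero.1 ((p.tendsto_nhds_iff).1 h).1

theorem Polynomial.eq_C_of_isBigO_one {p : ℝ[X]}
    (h : (fun x => p.eval x) =O[atTop] (fun _ => (1 : ℝ))) : p = C (p.coeff 0) :=
  eq_C_of_degree_le_zero ((p.isBoundedUnder_abs_atTop_iff).1 (by
    simpa only [Real.norm_eq_abs] using (isBigO_one_iff ℝ).1 h))

theorem inv_sub_eq_sum_add {K : Type*} [Field K] {z μ : K} (hz : z ≠ 0) (hzμ : z - μ ≠ 0)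
    (n : ℕ) : (z - μ)⁻¹ = ∑ m ∈ range n, μ ^ m / z ^ (m + 1) + μ ^ n / (z ^ n * (z - μ)) := by
  induction n with
  | zero => simp
  | succ n ih =>
    rw [ih, sum_range_succ]
    field_simp
    ring

noncomputable def cauchyTransform {ι : Type*} [Fintype ι] (w μ : ι → ℝ) (z : ℝ) : ℝ :=
  ∑ t, w t / (z - μ t)

theorem eventually_forall_lt_atTop {ι : Type*} [Finite ι] (μ : ι → ℝ) :
    ∀ᶠ z in atTop, 0 < z ∧ ∀ t, μ t < z :=
  (eventually_gt_atTop 0).and (eventually_all.2 fun t => eventually_gt_atTop (μ t))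

section CauchyTransform

variable {ι : Type*} [Fintype ι]

theorem cauchyTransform_isBigO_inv (w μ : ι → ℝ) :
    cauchyTransform w μ =O[atTop] (fun z => z⁻¹) := by
  refine IsBigO.fun_sum fun t _ => ?_
  have hsub : (fun z : ℝ => z - μ t) ~[atTop] id :=
    IsEquivalent.refl.sub_isLittleO (isLittleO_const_id_atTop (μ t))
  exact (hsub.inv.isBigO.const_mul_left (w t)).congr (fun z => by simp [div_eq_mul_inv])
    fun z => by simp

theorem cauchyTransform_eq_sum_add (w μ : ι → ℝ) {z : ℝ} (hz : z ≠ 0) (hzμ : ∀ t, z - μ t ≠ 0)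
    (n : ℕ) : cauchyTransform w μ z = ∑ m ∈ range n, (∑ t, w t * μ t ^ m) / z ^ (m + 1)
      + cauchyTransform (fun t => w t * μ t ^ n) μ z / z ^ n := by
  simp only [cauchyTransform, div_eq_mul_inv (w _), inv_sub_eq_sum_add hz (hzμ _) n, mul_add,
    sum_add_distrib, mul_sum, sum_div]
  rw [sum_comm]
  congr 1 <;> refine sum_congr rfl fun _ _ => ?_
  · refine sum_congr rfl fun _ _ => ?_
    ring
  · field_simp

theorem cauchyTransform_isBigO_inv_pow_of_moments (w μ : ι → ℝ) {n : ℕ}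
    (h : ∀ m < n, ∑ t, w t * μ t ^ m = 0) :
    cauchyTransform w μ =O[atTop] (fun z => (z ^ (n + 1))⁻¹) := by
  refine ((cauchyTransform_isBigO_inv (fun t => w t * μ t ^ n) μ).mul
    (isBigO_refl (fun z : ℝ => (z ^ n)⁻¹) atTop)).congr' ?_ (Eventually.of_forall fun z => ?_)
  · filter_upwards [eventually_forall_lt_atTop μ] with z ⟨hz, hzμ⟩
    rw [cauchyTransform_eq_sum_add w μ hz.ne' (fun t => (sub_pos.2 (hzμ t)).ne') n,
      sum_eq_zero fun m hm => by rw [h m (mem_range.1 hm), zero_div], zero_add, div_eq_mul_inv]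
  · simp only [pow_succ, mul_inv, mul_comm]

theorem moments_eq_zero_of_cauchyTransform_isBigO_inv_pow (w μ : ι → ℝ) {n : ℕ}
    (h : cauchyTransform w μ =O[atTop] (fun z => (z ^ (n + 1))⁻¹)) :
    ∀ m < n, ∑ t, w t * μ t ^ m = 0 := by
  -- `z ^ n` times the transform is a polynomial in `z` with the first `n` moments as
  -- coefficients plus a tail tending to zero; as the product tends to zero, the polynomial is `0`
  set tail := cauchyTransform (fun t => w t * μ t ^ n) μ
  set p : ℝ[X] := ∑ m ∈ range n, C (∑ t, w t * μ t ^ m) * X ^ (n - 1 - m)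
  have hp : ∀ᶠ z in atTop, z ^ n * cauchyTransform w μ z - tail z = p.eval z := by
    filter_upwards [eventually_forall_lt_atTop μ] with z ⟨hz, hzμ⟩
    rw [cauchyTransform_eq_sum_add w μ hz.ne' (fun t => (sub_pos.2 (hzμ t)).ne') n, mul_add,
      mul_sum, mul_div_cancel₀ _ (pow_ne_zero n hz.ne'), add_sub_cancel_right, eval_finsetSum]
    refine sum_congr rfl fun m hm => ?_
    have hsplit : z ^ n = z ^ (n - 1 - m) * z ^ (m + 1) := by
      rw [← pow_add]; congr 1; have := mem_range.1 hm; omega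
    rw [hsplit, eval_mul, eval_C, eval_pow, eval_X]
    field_simp
  have hmain : Tendsto (fun z => z ^ n * cauchyTransform w μ z) atTop (𝓝 0) := by
    refine ((isBigO_refl (fun z : ℝ => z ^ n) atTop).mul h).trans_tendsto ?_
    refine tendsto_inv_atTop_zero.congr' ?_
    filter_upwards [eventually_ne_atTop 0] with z hz
    field_simp
    ring
  have htail : Tendsto tail atTop (𝓝 0) :=
    (cauchyTransform_isBigO_inv _ μ).trans_tendsto tendsto_inv_atTop_zero
  have hlim : Tendsto (fun z => z ^ n * cauchyTransform w μ z - tail z) atTop (𝓝 0) := by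
    simpa using hmain.sub htail
  have hp0 : p = 0 := eq_zero_of_tendsto_zero (hlim.congr' hp)
  intro m hm
  have hcoeff := congrArg (coeff · (n - 1 - m)) hp0
  simp only [p, finsetSum_coeff, coeff_C_mul_X_pow, coeff_zero] at hcoeff
  rwa [sum_congr rfl fun x hx => by
    rw [if_congr (show n - 1 - m = n - 1 - x ↔ m = x by have := mem_range.1 hx; omega)
      rfl rfl], sum_ite_eq, if_pos (mem_range.2 hm)] at hcoeff

theorem cauchyTransform_isBigO_inv_pow_iff (w μ : ι → ℝ) (n : ℕ) :
    cauchyTransform w μ =O[atTop] (fun z => (z ^ (n + 1))⁻¹)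
      ↔ ∀ m < n, ∑ t, w t * μ t ^ m = 0 :=
  ⟨moments_eq_zero_of_cauchyTransform_isBigO_inv_pow w μ,
    cauchyTransform_isBigO_inv_pow_of_moments w μ⟩

end CauchyTransform

section PolynomialEval

variable {R : Type*} [CommRing R] {k : ℕ}

theorem Polynomial.eval_eq_mul_eval_divX {Q : R[X]} (hQ0 : Q.eval 0 = 0) (x : R) :
    Q.eval x = x * Q.divX.eval x := by
  conv_lhs => rw [← Q.X_mul_divX_add, coeff_zero_eq_eval_zero, hQ0]
  simp

theorem Polynomial.eval_divX_eq_sum {Q : R[X]} (hQ : Q.natDegree ≤ k) (x : R) :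
    Q.divX.eval x = ∑ j : Fin k, Q.coeff (j + 1) * x ^ (j : ℕ) := by
  rw [eval_eq_sum_range' (n := k + 1) (natDegree_divX_le.trans_lt (Nat.lt_succ_of_le hQ)),
    sum_range_succ, coeff_divX, coeff_eq_zero_of_natDegree_lt (by omega), zero_mul, add_zero,
    ← Fin.sum_univ_eq_sum_range]
  simp only [coeff_divX]

theorem Polynomial.eq_of_coeff_succ_eq {p q : R[X]} (hp : p.natDegree ≤ k) (hq : q.natDegree ≤ k)
    (h0 : p.coeff 0 = q.coeff 0) (h : ∀ j : Fin k, p.coeff (j + 1) = q.coeff (j + 1)) :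
    p = q := by
  ext (_ | i)
  · exact h0
  · rcases lt_or_ge i k with hi | hi
    · exact h ⟨i, hi⟩
    · rw [coeff_eq_zero_of_natDegree_lt (by omega), coeff_eq_zero_of_natDegree_lt (by omega)]

theorem Polynomial.exists_coeff_succ_eq [Nontrivial R] (q : Fin k → R) :
    ∃ Q : R[X], Q.natDegree ≤ k ∧ Q.eval 0 = 0 ∧ ∀ j : Fin k, Q.coeff (j + 1) = q j := by
  set P := (degreeLTEquiv R k).symm q
  have hP : ∀ j : Fin k, (P : R[X]).coeff j = q j := fun j =>
    congrFun ((degreeLTEquiv R k).apply_symm_apply q) j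
  refine ⟨X * (P : R[X]), ?_, by simp, fun j => by rw [coeff_X_mul, hP]⟩
  have hdeg := mem_degreeLT.1 P.2
  rcases eq_or_ne (P : R[X]) 0 with h | h
  · simp [h]
  · rw [natDegree_X_mul h]
    have := (natDegree_lt_iff_degree_lt h).2 hdeg
    omega

theorem Polynomial.exists_forall_mulVec_coeff_succ_eq_iff {K : Type*} [Field K]
    {A : Matrix (Fin k) (Fin k) K} (hA : A.det ≠ 0) (v : Fin k → K) :
    ∃ Q₀ : K[X], Q₀.natDegree ≤ k ∧ Q₀.eval 0 = 0 ∧ ∀ Q : K[X], Q.natDegree ≤ k → Q.eval 0 = 0 →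
      (A.mulVec (fun j => Q.coeff (j + 1)) = v ↔ Q = Q₀) := by
  obtain ⟨Q₀, hQ₀, hQ₀0, hcoeff⟩ := exists_coeff_succ_eq (A⁻¹.mulVec v)
  have hsolve : A.mulVec (fun j => Q₀.coeff (j + 1)) = v := by
    rw [_root_.funext hcoeff, Matrix.mulVec_mulVec, Matrix.mul_nonsing_inv _ hA.isUnit,
      Matrix.one_mulVec]
  refine ⟨Q₀, hQ₀, hQ₀0, fun Q hQ hQ0 => ⟨fun h => ?_, fun h => h ▸ hsolve⟩⟩
  refine eq_of_coeff_succ_eq hQ hQ₀ (by rw [coeff_zero_eq_eval_zero, hQ0,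
    coeff_zero_eq_eval_zero, hQ₀0]) fun j => ?_
  exact congrFun (Matrix.mulVec_injective_of_det_ne_zero hA (h.trans hsolve.symm)) j

theorem Polynomial.eval_divByMonic_X_sub_C_mul (Q : R[X]) (t z : R) :
    (z - t) * (Q /ₘ (X - C t)).eval z = Q.eval z - Q.eval t := by
  simpa [modByMonic_X_sub_C_eq_C_eval] using
    congrArg (eval z) (X_sub_C_mul_divByMonic_eq_sub_modByMonic Q t)

end PolynomialEval

section CauchyPolyPart

variable {ι : Type*} [Fintype ι]

noncomputable def cauchyPolyPart (w μ : ι → ℝ) (Q : ℝ[X]) : ℝ[X] :=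
  ∑ t, C (w t) * (Q /ₘ (X - C (μ t)))

theorem eval_mul_cauchyTransform_sub_cauchyPolyPart (w μ : ι → ℝ) (Q : ℝ[X]) {z : ℝ}
    (hz : ∀ t, z - μ t ≠ 0) :
    Q.eval z * cauchyTransform w μ z - (cauchyPolyPart w μ Q).eval z
      = cauchyTransform (fun t => w t * Q.eval (μ t)) μ z := by
  simp only [cauchyTransform, cauchyPolyPart, eval_finsetSum, mul_sum]
  rw [← sum_sub_distrib]
  refine sum_congr rfl fun t _ => ?_
  have := Q.eval_divByMonic_X_sub_C_mul (μ t) z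
  rw [eval_mul, eval_C]
  field_simp [hz t]
  linear_combination (-w t) * this

theorem natDegree_cauchyPolyPart_le (w μ : ι → ℝ) (Q : ℝ[X]) :
    (cauchyPolyPart w μ Q).natDegree ≤ Q.natDegree - 1 :=
  natDegree_sum_le_of_forall_le _ _ fun t _ => (natDegree_C_mul_le _ _).trans <| by
    rw [natDegree_divByMonic Q (monic_X_sub_C _), natDegree_X_sub_C]

theorem cauchyPolyPart_eval_zero (w μ : ι → ℝ) {Q : ℝ[X]} (hQ0 : Q.eval 0 = 0)
    (hμ : ∀ t, μ t ≠ 0) : (cauchyPolyPart w μ Q).eval 0 = ∑ t, w t * Q.divX.eval (μ t) := by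
  simp only [cauchyPolyPart, eval_finsetSum, eval_mul, eval_C]
  refine sum_congr rfl fun t _ => ?_
  have hdiv := Q.eval_divByMonic_X_sub_C_mul (μ t) 0
  rw [hQ0, Q.eval_eq_mul_eval_divX hQ0, zero_sub, zero_sub, neg_mul, neg_inj] at hdiv
  rw [mul_left_cancel₀ (hμ t) hdiv]

end CauchyPolyPart

section WeylFunctions

variable {ι : Type*} [Fintype ι] {lam b c : ι → ℝ}

theorem cauchyTransform_neg_mul_add (hc : ∀ i, c i = -∑ j, b j * b i / (lam j + lam i))
    (u : ι → ℝ) {z : ℝ} (hsum : ∀ a d, lam a + lam d ≠ 0) (hz : ∀ a, z - lam a ≠ 0)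
    (hz' : ∀ d, z + lam d ≠ 0) :
    cauchyTransform b (-lam) z * cauchyTransform (fun a => b a * u a) lam z
        + cauchyTransform (fun a => c a * u a) lam z
      = -cauchyTransform (fun d => b d * ∑ a, b a * u a / (lam a + lam d)) (-lam) z := by
  simp only [cauchyTransform, Pi.neg_apply, sub_neg_eq_add, hc, neg_mul, sum_mul, sum_div,
    mul_sum, ← sum_neg_distrib]
  rw [← sum_add_distrib, sum_comm (γ := ι) (s := univ) (t := univ) (f := fun d a =>
    -(b d * (b a * u a / (lam a + lam d)) / (z + lam d)))]
  refine sum_congr rfl fun a _ => ?_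
  rw [← sum_add_distrib]
  refine sum_congr rfl fun d _ => ?_
  have := hsum a d
  have := hz a
  have := hz' d
  rw [add_comm (lam d) (lam a)]
  field_simp
  ring

theorem cauchyTransform_neg_mul_add_self (hc : ∀ i, c i = -∑ j, b j * b i / (lam j + lam i))
    {z : ℝ} (hsum : ∀ a d, lam a + lam d ≠ 0) (hz : ∀ a, z - lam a ≠ 0)
    (hz' : ∀ d, z + lam d ≠ 0) :
    cauchyTransform b (-lam) z * cauchyTransform b lam z + cauchyTransform c lam z
      = cauchyTransform c (-lam) z := by
  have h := cauchyTransform_neg_mul_add hc (fun _ => 1) hsum hz hz'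
  simp only [mul_one] at h
  rw [h, cauchyTransform, cauchyTransform, ← sum_neg_distrib]
  refine sum_congr rfl fun d _ => ?_
  rw [hc d, mul_sum, neg_div]
  congr 2
  exact sum_congr rfl fun a _ => by ring

theorem neg_cauchyTransform_neg (w μ : ι → ℝ) (z : ℝ) :
    -cauchyTransform w μ (-z) = cauchyTransform w (-μ) z := by
  rw [cauchyTransform, cauchyTransform, ← sum_neg_distrib]
  refine sum_congr rfl fun t _ => ?_
  rw [Pi.neg_apply, sub_neg_eq_add, show -z - μ t = -(z + μ t) by ring, div_neg, neg_neg]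

end WeylFunctions

section TypeIIApproximation

variable {ι : Type*} [Fintype ι]

noncomputable def moment (b lam : ι → ℝ) (j : ℕ) : ℝ := ∑ a, b a * lam a ^ j

noncomputable def bimoment (b lam : ι → ℝ) (i j : ℕ) : ℝ :=
  ∑ a, ∑ d, b a * b d * lam a ^ i * lam d ^ j / (lam a + lam d)

noncomputable def approxPHat (M : ℝ) (lam c : ι → ℝ) (Q : ℝ[X]) : ℝ[X] :=
  C (-(1 / (2 * M))) * Q.divX + cauchyPolyPart c lam Q

noncomputable def approxP (lam b : ι → ℝ) (Q : ℝ[X]) : ℝ[X] :=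
  cauchyPolyPart b lam Q + C (1 - ∑ a, b a * Q.divX.eval (lam a))

-- The residue of `P̂ + P W* + Q Z*` at `z = -λ_d`.
noncomputable def approxResidue (lam b : ι → ℝ) (Q : ℝ[X]) (d : ι) : ℝ :=
  b d * (∑ a, b a * Q.eval (lam a) / (lam a + lam d) - (∑ a, b a * Q.divX.eval (lam a) - 1))

theorem eval_mul_sub_approxPHat (M : ℝ) (lam c : ι → ℝ) {Q : ℝ[X]} (hQ0 : Q.eval 0 = 0) {z : ℝ}
    (hz : z ≠ 0) (hzl : ∀ a, z - lam a ≠ 0) :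
    Q.eval z * (-(1 / (2 * M * z)) + cauchyTransform c lam z) - (approxPHat M lam c Q).eval z
      = cauchyTransform (fun a => c a * Q.eval (lam a)) lam z := by
  rw [← eval_mul_cauchyTransform_sub_cauchyPolyPart c lam Q hzl, approxPHat, eval_add, eval_mul,
    eval_C, Q.eval_eq_mul_eval_divX hQ0 z]
  field_simp
  ring

theorem isBigO_eval_mul_sub_iff_eq_approxPHat (M : ℝ) (lam c : ι → ℝ) {Q Phat : ℝ[X]}
    (hQ0 : Q.eval 0 = 0) :
    (fun z => Q.eval z * (-(1 / (2 * M * z)) + cauchyTransform c lam z) - Phat.eval z)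
      =O[atTop] (fun z => z⁻¹) ↔ Phat = approxPHat M lam c Q := by
  have hkey : (fun z => Q.eval z * (-(1 / (2 * M * z)) + cauchyTransform c lam z)
      - (approxPHat M lam c Q).eval z)
      =ᶠ[atTop] cauchyTransform (fun a => c a * Q.eval (lam a)) lam := by
    filter_upwards [eventually_forall_lt_atTop lam] with z ⟨hz, hzl⟩
    exact eval_mul_sub_approxPHat M lam c hQ0 hz.ne' fun a => (sub_pos.2 (hzl a)).ne'
  have hO := (cauchyTransform_isBigO_inv _ lam).congr' hkey.symm EventuallyEq.rfl
  refine ⟨fun h => ?_, fun h => h ▸ hO⟩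
  have hdiff : (fun z => (approxPHat M lam c Q - Phat).eval z) =O[atTop] (fun z => z⁻¹) :=
    (h.sub hO).congr (fun z => by simp only [eval_sub]; ring) fun _ => rfl
  exact (sub_eq_zero.1 (eq_zero_of_tendsto_zero
    (hdiff.trans_tendsto tendsto_inv_atTop_zero))).symm

theorem isBigO_eval_mul_sub_iff_eq_approxP {lam b : ι → ℝ} (hlam : ∀ a, lam a ≠ 0) {Q P : ℝ[X]}
    (hQ0 : Q.eval 0 = 0) (hP0 : P.eval 0 = 1) :
    (fun z => Q.eval z * cauchyTransform b lam z - P.eval z) =O[atTop] (fun _ => (1 : ℝ))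
      ↔ P = approxP lam b Q := by
  have hkey : (fun z => Q.eval z * cauchyTransform b lam z - (cauchyPolyPart b lam Q).eval z)
      =ᶠ[atTop] cauchyTransform (fun a => b a * Q.eval (lam a)) lam := by
    filter_upwards [eventually_forall_lt_atTop lam] with z ⟨_, hzl⟩
    exact eval_mul_cauchyTransform_sub_cauchyPolyPart b lam Q fun a => (sub_pos.2 (hzl a)).ne'
  have hO : (fun z => Q.eval z * cauchyTransform b lam z - (cauchyPolyPart b lam Q).eval z)
      =O[atTop] (fun _ => (1 : ℝ)) :=
    ((cauchyTransform_isBigO_inv _ lam).trans (tendsto_inv_atTop_zero.isBigO_one ℝ)).congr'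
      hkey.symm EventuallyEq.rfl
  refine ⟨fun h => ?_, fun h => ?_⟩
  · have hconst := eq_C_of_isBigO_one <| (hO.sub h).congr
      (fun z => by simp only [eval_sub]; ring : ∀ z, _ = (P - cauchyPolyPart b lam Q).eval z)
      fun _ => rfl
    rw [coeff_zero_eq_eval_zero, eval_sub, hP0, cauchyPolyPart_eval_zero b lam hQ0 hlam] at hconst
    rw [approxP, ← hconst, add_sub_cancel]
  · subst h
    refine (hO.sub (isBigO_const_one ℝ (1 - ∑ a, b a * Q.divX.eval (lam a)) atTop)).congr
      (fun z => ?_) fun _ => rfl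
    simp only [approxP, eval_add, eval_C]
    ring

theorem approximationError_eq_cauchyTransform {lam b c : ι → ℝ}
    (hc : ∀ i, c i = -∑ j, b j * b i / (lam j + lam i))
    (hpos : ∀ a, 0 < lam a) (M : ℝ) {Q : ℝ[X]} (hQ0 : Q.eval 0 = 0) {z : ℝ} (hz : 0 < z)
    (hzl : ∀ a, lam a < z) :
    (approxPHat M lam c Q).eval z + (approxP lam b Q).eval z * -cauchyTransform b lam (-z)
        + Q.eval z * (-(1 / (2 * M * -z)) + cauchyTransform c lam (-z))
      = cauchyTransform (approxResidue lam b Q) (-lam) z := by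
  have hzl' : ∀ a, z - lam a ≠ 0 := fun a => (sub_pos.2 (hzl a)).ne'
  have hzl'' : ∀ d, z + lam d ≠ 0 := fun d => (add_pos hz (hpos d)).ne'
  have hsum : ∀ a d, lam a + lam d ≠ 0 := fun a d => (add_pos (hpos a) (hpos d)).ne'
  have hQZ := eval_mul_sub_approxPHat M lam c hQ0 hz.ne' hzl'
  have hQW := eval_mul_cauchyTransform_sub_cauchyPolyPart b lam Q hzl'
  have hcross := cauchyTransform_neg_mul_add hc (fun a => Q.eval (lam a)) hsum hzl' hzl''
  have hZsym := cauchyTransform_neg_mul_add_self hc hsum hzl' hzl''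
  have hres : cauchyTransform (approxResidue lam b Q) (-lam) z
      = cauchyTransform (fun d => b d * ∑ a, b a * Q.eval (lam a) / (lam a + lam d)) (-lam) z
        - (∑ a, b a * Q.divX.eval (lam a) - 1) * cauchyTransform b (-lam) z := by
    rw [cauchyTransform, cauchyTransform, cauchyTransform, mul_sum, ← sum_sub_distrib]
    exact sum_congr rfl fun d _ => by rw [approxResidue]; ring
  rw [neg_cauchyTransform_neg, ← neg_neg (cauchyTransform c lam (-z)), neg_cauchyTransform_neg,
    approxP, eval_add, eval_C, mul_neg, div_neg, neg_neg]
  linear_combination -hQZ - cauchyTransform b (-lam) z * hQW - hcross + Q.eval z * hZsym - hres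

theorem sum_approxResidue_mul_pow {lam b : ι → ℝ} (hpos : ∀ a, 0 < lam a) {k : ℕ} {Q : ℝ[X]}
    (hQ : Q.natDegree ≤ k) (hQ0 : Q.eval 0 = 0) (m : ℕ) :
    ∑ d, approxResidue lam b Q d * lam d ^ m
      = moment b lam m - ∑ j : Fin k, bimoment b lam (m + 1) j * Q.coeff (j + 1) := by
  have hsum : ∀ a d, lam a + lam d ≠ 0 := fun a d => (add_pos (hpos a) (hpos d)).ne'
  -- `λₐ / (λₐ + λ_d) - 1 = -λ_d / (λₐ + λ_d)` trades the factor `λₐ` for a power of `λ_d`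
  have hinner : ∀ d, ∑ a, b a * Q.eval (lam a) / (lam a + lam d)
        - (∑ a, b a * Q.divX.eval (lam a) - 1)
      = 1 - ∑ a, b a * Q.divX.eval (lam a) * lam d / (lam a + lam d) := fun d => by
    rw [sub_sub_eq_add_sub, add_comm, add_sub_assoc, ← sum_sub_distrib, sub_eq_add_neg (1 : ℝ),
      ← sum_neg_distrib]
    congr 1
    refine sum_congr rfl fun a _ => ?_
    rw [Q.eval_eq_mul_eval_divX hQ0]
    field_simp [hsum a d]
    ring
  calc ∑ d, approxResidue lam b Q d * lam d ^ m
      = ∑ d, (b d * lam d ^ m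
          - ∑ a, b a * b d * lam d ^ (m + 1) * Q.divX.eval (lam a) / (lam a + lam d)) := by
        refine sum_congr rfl fun d _ => ?_
        rw [approxResidue, hinner d, mul_sub, sub_mul, mul_one, mul_sum, sum_mul]
        congr 1
        exact sum_congr rfl fun a _ => by ring
    _ = moment b lam m - ∑ a, ∑ d,
          b a * b d * lam a ^ (m + 1) * Q.divX.eval (lam d) / (lam a + lam d) := by
        rw [sum_sub_distrib]
        congr 1
        exact sum_congr rfl fun a _ => sum_congr rfl fun d _ => by ring
    _ = moment b lam m - ∑ j : Fin k, bimoment b lam (m + 1) j * Q.coeff (j + 1) := by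
        simp only [Q.eval_divX_eq_sum hQ, bimoment, mul_sum, sum_div, sum_mul]
        rw [sum_comm (s := univ (α := Fin k))]
        congr 1
        refine sum_congr rfl fun a _ => ?_
        rw [sum_comm]
        exact sum_congr rfl fun d _ => sum_congr rfl fun j _ => by ring

theorem natDegree_approxPHat_le (M : ℝ) (lam c : ι → ℝ) {k : ℕ} {Q : ℝ[X]}
    (hQ : Q.natDegree ≤ k) : (approxPHat M lam c Q).natDegree ≤ k - 1 := by
  refine (natDegree_add_le _ _).trans (max_le ((natDegree_C_mul_le _ _).trans ?_)
    ((natDegree_cauchyPolyPart_le c lam Q).trans (by omega)))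
  rw [natDegree_divX_eq_natDegree_tsub_one]
  omega

theorem natDegree_approxP_le (lam b : ι → ℝ) {k : ℕ} {Q : ℝ[X]} (hQ : Q.natDegree ≤ k) :
    (approxP lam b Q).natDegree ≤ k - 1 :=
  (natDegree_add_le _ _).trans (max_le ((natDegree_cauchyPolyPart_le b lam Q).trans (by omega))
    (by rw [natDegree_C]; exact Nat.zero_le _))

theorem approxP_eval_zero {lam : ι → ℝ} (hlam : ∀ a, lam a ≠ 0) (b : ι → ℝ) {Q : ℝ[X]}
    (hQ0 : Q.eval 0 = 0) : (approxP lam b Q).eval 0 = 1 := by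
  rw [approxP, eval_add, eval_C, cauchyPolyPart_eval_zero b lam hQ0 hlam, add_sub_cancel]

theorem approximationConditions_iff {lam b c : ι → ℝ}
    (hc : ∀ i, c i = -∑ j, b j * b i / (lam j + lam i))
    (hpos : ∀ a, 0 < lam a) (M : ℝ) {k : ℕ} {Q P Phat : ℝ[X]} (hQ : Q.natDegree ≤ k)
    (hQ0 : Q.eval 0 = 0) (hP0 : P.eval 0 = 1) :
    ((fun z => Q.eval z * (-(1 / (2 * M * z)) + cauchyTransform c lam z) - Phat.eval z)
          =O[atTop] (fun z => z⁻¹) ∧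
        (fun z => Q.eval z * cauchyTransform b lam z - P.eval z) =O[atTop] (fun _ => (1 : ℝ)) ∧
        (fun z => Phat.eval z + P.eval z * -cauchyTransform b lam (-z)
            + Q.eval z * (-(1 / (2 * M * -z)) + cauchyTransform c lam (-z)))
          =O[atTop] (fun z => (z ^ (k + 1))⁻¹))
      ↔ Phat = approxPHat M lam c Q ∧ P = approxP lam b Q ∧
        ∀ i : Fin k, ∑ j : Fin k, bimoment b lam (i + 1) j * Q.coeff (j + 1) = moment b lam i := by
  rw [isBigO_eval_mul_sub_iff_eq_approxPHat M lam c hQ0,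
    isBigO_eval_mul_sub_iff_eq_approxP (fun a => (hpos a).ne') hQ0 hP0]
  refine and_congr_right fun hPhat => and_congr_right fun hP => ?_
  subst hPhat hP
  have herr : (fun z => (approxPHat M lam c Q).eval z + (approxP lam b Q).eval z *
      -cauchyTransform b lam (-z) + Q.eval z * (-(1 / (2 * M * -z)) + cauchyTransform c lam (-z)))
      =ᶠ[atTop] cauchyTransform (approxResidue lam b Q) (-lam) := by
    filter_upwards [eventually_forall_lt_atTop lam] with z ⟨hz, hzl⟩
    exact approximationError_eq_cauchyTransform hc hpos M hQ0 hz hzl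
  have hmoment : ∀ m, ∑ d, approxResidue lam b Q d * (-lam) d ^ m = (-1) ^ m *
      (moment b lam m - ∑ j : Fin k, bimoment b lam (m + 1) j * Q.coeff (j + 1)) := fun m => by
    rw [← sum_approxResidue_mul_pow hpos hQ hQ0, mul_sum]
    exact sum_congr rfl fun d _ => by rw [Pi.neg_apply, neg_pow]; ring
  rw [isBigO_congr herr EventuallyEq.rfl, cauchyTransform_isBigO_inv_pow_iff]
  simp only [hmoment, mul_eq_zero, pow_eq_zero_iff', neg_eq_zero, one_ne_zero, false_and,
    false_or, sub_eq_zero]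
  exact ⟨fun h i => (h i i.2).symm, fun h m hm => (h ⟨m, hm⟩).symm⟩

theorem det_bimoment_pos {m k : ℕ} {lam b : Fin m → ℝ} (hmono : StrictMono lam)
    (hpos : ∀ a, 0 < lam a) (hb : ∀ a, b a < 0) (hk : k ≤ m) :
    0 < (Matrix.of fun i j : Fin k => bimoment b lam (i + 1) j).det := by
  have hfactor : (Matrix.of fun i j : Fin k => bimoment b lam (i + 1) j)
      = Matrix.of fun i j : Fin k =>
      ∑ a, ∑ d, (-b a * lam a) * -b d * lam a ^ (i : ℕ) * lam d ^ (j : ℕ) / (lam a + lam d) := by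
    ext i j
    rw [Matrix.of_apply, Matrix.of_apply, bimoment]
    exact sum_congr rfl fun a _ => sum_congr rfl fun d _ => by ring
  rw [hfactor]
  exact Matrix.det_of_sum_mul_pow_div_add_pos hmono hmono (fun a d => add_pos (hpos a) (hpos d))
    (fun a => mul_pos (neg_pos.2 (hb a)) (hpos a)) (fun d => neg_pos.2 (hb d)) hk

theorem exists_forall_bimoment_system_iff {m k : ℕ} {lam b : Fin m → ℝ} (hmono : StrictMono lam)
    (hpos : ∀ a, 0 < lam a) (hb : ∀ a, b a < 0) (hk : k ≤ m) :
    ∃ Q₀ : ℝ[X], Q₀.natDegree ≤ k ∧ Q₀.eval 0 = 0 ∧ ∀ Q : ℝ[X], Q.natDegree ≤ k → Q.eval 0 = 0 →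
      ((∀ i : Fin k, ∑ j : Fin k, bimoment b lam (i + 1) j * Q.coeff (j + 1) = moment b lam i)
        ↔ Q = Q₀) := by
  obtain ⟨Q₀, hQ₀, hQ₀0, hiff⟩ := exists_forall_mulVec_coeff_succ_eq_iff
    (det_bimoment_pos hmono hpos hb hk).ne' fun i => moment b lam i
  refine ⟨Q₀, hQ₀, hQ₀0, fun Q hQ hQ0 => ?_⟩
  rw [← hiff Q hQ hQ0]
  simp only [funext_iff, Matrix.mulVec, dotProduct, Matrix.of_apply]

end TypeIIApproximation

theorem stmt15_general (n : ℕ) (lam b : Fin (n - 1) → ℝ)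
    (hmono : StrictMono lam) (hpos : ∀ i, 0 < lam i) (hb : ∀ i, b i < 0)
    (M : ℝ) (k : ℕ) (hk2 : k ≤ n - 1)
    (c : Fin (n - 1) → ℝ)
    (hc : ∀ i, c i = -∑ j, b j * b i / (lam j + lam i))
    (W Z Ws Zs : ℝ → ℝ)
    (hW : ∀ z, W z = ∑ i, b i / (z - lam i))
    (hZ : ∀ z, Z z = -(1 / (2 * M * z)) + ∑ i, c i / (z - lam i))
    (hWs : ∀ z, Ws z = -W (-z)) (hZs : ∀ z, Zs z = Z (-z))
    (β : ℕ → ℝ) (hβ : ∀ j, β j = ∑ a, b a * lam a ^ j)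
    (I : ℕ → ℕ → ℝ)
    (hI : ∀ i j, I i j = ∑ a, ∑ d, b a * b d * lam a ^ i * lam d ^ j / (lam a + lam d)) :
    (∃! QPP : Polynomial ℝ × Polynomial ℝ × Polynomial ℝ,
      QPP.1.natDegree ≤ k ∧ QPP.2.1.natDegree ≤ k - 1 ∧ QPP.2.2.natDegree ≤ k - 1 ∧
      QPP.1.eval 0 = 0 ∧ QPP.2.1.eval 0 = 1 ∧
      (fun z => QPP.1.eval z * Z z - QPP.2.2.eval z) =O[atTop] (fun z : ℝ => z⁻¹) ∧
      (fun z => QPP.1.eval z * W z - QPP.2.1.eval z) =O[atTop] (fun _ : ℝ => (1 : ℝ)) ∧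
      (fun z => QPP.2.2.eval z + QPP.2.1.eval z * Ws z + QPP.1.eval z * Zs z)
        =O[atTop] (fun z : ℝ => (z ^ (k + 1))⁻¹)) ∧
    (∀ Q P Phat : Polynomial ℝ,
      Q.natDegree ≤ k → P.natDegree ≤ k - 1 → Phat.natDegree ≤ k - 1 →
      Q.eval 0 = 0 → P.eval 0 = 1 →
      (fun z => Q.eval z * Z z - Phat.eval z) =O[atTop] (fun z : ℝ => z⁻¹) →
      (fun z => Q.eval z * W z - P.eval z) =O[atTop] (fun _ : ℝ => (1 : ℝ)) →
      (fun z => Phat.eval z + P.eval z * Ws z + Q.eval z * Zs z)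
        =O[atTop] (fun z : ℝ => (z ^ (k + 1))⁻¹) →
      ∀ i : Fin k, ∑ j : Fin k, I ((i : ℕ) + 1) (j : ℕ) * Q.coeff ((j : ℕ) + 1)
        = β (i : ℕ)) := by
  obtain rfl : W = cauchyTransform b lam := funext hW
  obtain rfl : Z = fun z => -(1 / (2 * M * z)) + cauchyTransform c lam z := funext hZ
  obtain rfl : Ws = fun z => -cauchyTransform b lam (-z) := funext hWs
  obtain rfl : Zs = fun z => -(1 / (2 * M * -z)) + cauchyTransform c lam (-z) := funext hZs
  obtain rfl : β = moment b lam := funext hβ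
  obtain rfl : I = bimoment b lam := funext fun i => funext (hI i)
  obtain ⟨Q₀, hQ₀, hQ₀0, hsystem⟩ := exists_forall_bimoment_system_iff hmono hpos hb hk2
  have hlam : ∀ a, lam a ≠ 0 := fun a => (hpos a).ne'
  have hP₀ := approxP_eval_zero hlam b hQ₀0
  refine ⟨⟨(Q₀, approxP lam b Q₀, approxPHat M lam c Q₀), ⟨hQ₀, natDegree_approxP_le lam b hQ₀,
      natDegree_approxPHat_le M lam c hQ₀, hQ₀0, hP₀,
      (approximationConditions_iff hc hpos M hQ₀ hQ₀0 hP₀).2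
        ⟨rfl, rfl, (hsystem Q₀ hQ₀ hQ₀0).2 rfl⟩⟩, ?_⟩,
    fun Q P Phat hQ _ _ hQ0 hP0 h1 h2 h3 =>
      ((approximationConditions_iff hc hpos M hQ hQ0 hP0).1 ⟨h1, h2, h3⟩).2.2⟩
  rintro ⟨Q, P, Phat⟩ ⟨hQ, -, -, hQ0, hP0, hcond⟩
  dsimp only at hQ hQ0 hP0 hcond
  obtain ⟨rfl, rfl, hsys⟩ := (approximationConditions_iff hc hpos M hQ hQ0 hP0).1 hcond
  obtain rfl := (hsystem Q hQ hQ0).1 hsys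
  rfl

/-- **The Type II simultaneous rational approximation problem.**
Given spectral data `0 < λ_1 < ⋯ < λ_{n−1}`, `b_i < 0`, `M > 0`, with
`c_i = −Σ_j b_j b_i/(λ_j + λ_i)`, `W(z) = Σ b_i/(z − λ_i)`,
`Z(z) = −1/(2Mz) + Σ c_i/(z − λ_i)`, `W*(z) = −W(−z)`, `Z*(z) = Z(−z)`:
for fixed `1 ≤ k ≤ n−1` there are unique polynomials `Q, P, P̂` of degrees
`≤ k, k−1, k−1` with `Q(0) = 0`, `P(0) = 1` such that `QZ − P̂ = O(z⁻¹)`,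
`QW − P = O(1)` and `P̂ + P W* + Q Z* = O(z^{−(k+1)})` as `z → ∞`; moreover the
coefficients `q_j = Q.coeff j` satisfy `Σ_{j=1}^k I_{i,j−1} q_j = β_{i−1}`,
where `β_j = Σ_a b_a λ_a^j` and `I_{ij} = Σ_{a,d} b_a b_d λ_a^i λ_d^j/(λ_a + λ_d)`. -/
theorem stmt15 (n : ℕ) (hn : 2 ≤ n) (lam b : Fin (n - 1) → ℝ)
    (hmono : StrictMono lam) (hpos : ∀ i, 0 < lam i) (hb : ∀ i, b i < 0)
    (M : ℝ) (hM : 0 < M) (k : ℕ) (hk1 : 1 ≤ k) (hk2 : k ≤ n - 1)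
    (c : Fin (n - 1) → ℝ)
    (hc : ∀ i, c i = -∑ j, b j * b i / (lam j + lam i))
    (W Z Ws Zs : ℝ → ℝ)
    (hW : ∀ z, W z = ∑ i, b i / (z - lam i))
    (hZ : ∀ z, Z z = -(1 / (2 * M * z)) + ∑ i, c i / (z - lam i))
    (hWs : ∀ z, Ws z = -W (-z)) (hZs : ∀ z, Zs z = Z (-z))
    (β : ℕ → ℝ) (hβ : ∀ j, β j = ∑ a, b a * lam a ^ j)
    (I : ℕ → ℕ → ℝ)
    (hI : ∀ i j, I i j = ∑ a, ∑ d, b a * b d * lam a ^ i * lam d ^ j / (lam a + lam d)) :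
    (∃! QPP : Polynomial ℝ × Polynomial ℝ × Polynomial ℝ,
      QPP.1.natDegree ≤ k ∧ QPP.2.1.natDegree ≤ k - 1 ∧ QPP.2.2.natDegree ≤ k - 1 ∧
      QPP.1.eval 0 = 0 ∧ QPP.2.1.eval 0 = 1 ∧
      (fun z => QPP.1.eval z * Z z - QPP.2.2.eval z) =O[atTop] (fun z : ℝ => z⁻¹) ∧
      (fun z => QPP.1.eval z * W z - QPP.2.1.eval z) =O[atTop] (fun _ : ℝ => (1 : ℝ)) ∧
      (fun z => QPP.2.2.eval z + QPP.2.1.eval z * Ws z + QPP.1.eval z * Zs z)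
        =O[atTop] (fun z : ℝ => (z ^ (k + 1))⁻¹)) ∧
    (∀ Q P Phat : Polynomial ℝ,
      Q.natDegree ≤ k → P.natDegree ≤ k - 1 → Phat.natDegree ≤ k - 1 →
      Q.eval 0 = 0 → P.eval 0 = 1 →
      (fun z => Q.eval z * Z z - Phat.eval z) =O[atTop] (fun z : ℝ => z⁻¹) →
      (fun z => Q.eval z * W z - P.eval z) =O[atTop] (fun _ : ℝ => (1 : ℝ)) →
      (fun z => Phat.eval z + P.eval z * Ws z + Q.eval z * Zs z)
        =O[atTop] (fun z : ℝ => (z ^ (k + 1))⁻¹) →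
      ∀ i : Fin k, ∑ j : Fin k, I ((i : ℕ) + 1) (j : ℕ) * Q.coeff ((j : ℕ) + 1)
        = β (i : ℕ)) :=
  stmt15_general n lam b hmono hpos hb M k hk2 c hc W Z Ws Zs hW hZ hWs hZs β hβ I hI
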